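/- Let λ > 0 and let {T_t}_{t>0} be the Bessel Poisson semigroup e^{−t√Δ_λ} with kernel P_t^{[λ]}(x,y). Then T_t(1) = 1 for all t > 0, i.e. ∫₀^∞ P_t^{[λ]}(x,y) y^{2λ} dy = 1 for all t, x > 0. -/

import Mathlib

noncomputable section
open MeasureTheory Set

/-- The Bessel Poisson kernel `P_t^{[λ]}(x,y)`. -/
def besselP (lam t x y : ℝ) : ℝ :=
  (2 * lam * t / Real.pi) * ∫ θ in Ioo (0 : ℝ) Real.pi,
    (Real.sin θ) ^ (2 * lam - 1) / (x ^ 2 + y ^ 2 + t ^ 2 - 2 * x * y * Real.cos θ) ^ (lam + 1)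

open Real ProbabilityTheory

/-!
In the coordinates `(u, v) = (y cos θ, y sin θ)` the measure `y^{2λ} sin^{2λ-1} θ dθ dy` on
`(0, ∞) × (0, π)` becomes `v^{2λ-1} du dv` on the upper half-plane, and
`x² + y² + t² - 2xy cos θ = (u - x)² + v² + t²`. Integrating first in `u` gives
`B(1/2, λ + 1/2) (v² + t²)^{-λ-1/2}`, and then in `v` gives `B(λ, 1/2) / (2t)`; the product of the
two Beta values is `π / λ`, which cancels the normalisation `2λt/π` of the kernel.
Both one-dimensional integrals reduce to the Beta integral on `(0, 1)` through `r = v² / (v² + s)`.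
-/

theorem integral_Ioo_rpow_mul_one_sub_rpow {a b : ℝ} (ha : 0 < a) (hb : 0 < b) :
    ∫ r in Ioo (0 : ℝ) 1, r ^ (a - 1) * (1 - r) ^ (b - 1) = beta a b := by
  rw [beta_eq_betaIntegralReal a b ha hb, Complex.betaIntegral,
    intervalIntegral.integral_of_le zero_le_one, ← integral_Ioc_eq_integral_Ioo,
    ← RCLike.re_to_complex, ← integral_re]
  · refine setIntegral_congr_fun measurableSet_Ioc fun r ⟨hr0, hr1⟩ ↦ ?_
    norm_cast
    rw [← Complex.ofReal_cpow hr0.le, ← Complex.ofReal_cpow (by linarith), RCLike.re_to_complex,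
      ← Complex.ofReal_mul, Complex.ofReal_re]
  · exact (intervalIntegrable_iff_integrableOn_Ioc_of_le zero_le_one).mp
      (Complex.betaIntegral_convergent (by simpa) (by simpa))

lemma image_sq_div_sq_add_Ioi {s : ℝ} (hs : 0 < s) :
    (fun v : ℝ ↦ v ^ 2 / (v ^ 2 + s)) '' Ioi 0 = Ioo 0 1 := by
  ext w
  simp only [mem_image, mem_Ioi, mem_Ioo]
  constructor
  · rintro ⟨v, hv, rfl⟩
    exact ⟨by positivity, (div_lt_one (by positivity)).2 (by linarith)⟩
  · rintro ⟨hw0, hw1⟩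
    have h1w : 0 < 1 - w := by linarith
    refine ⟨√(s * w / (1 - w)), by positivity, ?_⟩
    rw [sq_sqrt (by positivity)]
    field_simp
    ring

lemma strictMonoOn_sq_div_sq_add {s : ℝ} (hs : 0 < s) :
    StrictMonoOn (fun v : ℝ ↦ v ^ 2 / (v ^ 2 + s)) (Ioi 0) := by
  intro v hv w hw hvw
  simp only [mem_Ioi] at hv hw
  rw [div_lt_div_iff₀ (by positivity) (by positivity)]
  nlinarith [mul_lt_mul hvw hvw.le hv hw.le]

lemma hasDerivAt_sq_div_sq_add {s : ℝ} (hs : 0 < s) (v : ℝ) :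
    HasDerivAt (fun v : ℝ ↦ v ^ 2 / (v ^ 2 + s)) (2 * v * s / (v ^ 2 + s) ^ 2) v := by
  refine ((hasDerivAt_pow 2 v).div ((hasDerivAt_pow 2 v).add_const s)
    (by positivity)).congr_deriv ?_
  ring

theorem integral_Ioi_rpow_div_sq_add_rpow {a b s : ℝ} (ha : 0 < a) (hb : 0 < b) (hs : 0 < s) :
    ∫ v in Ioi (0 : ℝ), v ^ (2 * a - 1) / (v ^ 2 + s) ^ (a + b) = beta a b / (2 * s ^ b) := by
  have hsub := integral_image_eq_integral_abs_deriv_smul measurableSet_Ioi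
    (fun v _ ↦ (hasDerivAt_sq_div_sq_add hs v).hasDerivWithinAt)
    (strictMonoOn_sq_div_sq_add hs).injOn (fun r ↦ r ^ (a - 1) * (1 - r) ^ (b - 1))
  rw [image_sq_div_sq_add_Ioi hs, integral_Ioo_rpow_mul_one_sub_rpow ha hb] at hsub
  have hkey : ∀ v ∈ Ioi (0 : ℝ), |2 * v * s / (v ^ 2 + s) ^ 2| •
      ((v ^ 2 / (v ^ 2 + s)) ^ (a - 1) * (1 - v ^ 2 / (v ^ 2 + s)) ^ (b - 1)) =
      2 * s ^ b * (v ^ (2 * a - 1) / (v ^ 2 + s) ^ (a + b)) := by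
    intro v (hv : 0 < v)
    set D := v ^ 2 + s
    have hD0 : 0 < D := by positivity
    have h1 : 1 - v ^ 2 / D = s / D := by field_simp; ring
    have hv2 : (v ^ 2) ^ (a - 1) * v = v ^ (2 * a - 1) := by
      rw [← rpow_natCast, ← rpow_mul hv.le, ← rpow_add_one hv.ne']
      push_cast; ring_nf
    have hsb : s ^ (b - 1) * s = s ^ b := by rw [← rpow_add_one hs.ne']; ring_nf
    have hDab : D ^ (a + b) = D ^ (a - 1) * D ^ (b - 1) * D ^ 2 := by
      rw [← rpow_add hD0, ← rpow_natCast, ← rpow_add hD0]; push_cast; ring_nf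
    rw [smul_eq_mul, abs_of_pos (by positivity), h1, div_rpow (by positivity) hD0.le,
      div_rpow hs.le hD0.le, hDab, ← hv2, ← hsb]
    field_simp
  rw [setIntegral_congr_fun measurableSet_Ioi hkey, integral_const_mul] at hsub
  have hsb : 0 < s ^ b := by positivity
  field_simp
  linarith

theorem integral_one_div_sq_sub_add_rpow {q s : ℝ} (x : ℝ) (hq : 1 / 2 < q) (hs : 0 < s) :
    ∫ u : ℝ, 1 / ((u - x) ^ 2 + s) ^ q = beta (1 / 2) (q - 1 / 2) / s ^ (q - 1 / 2) := by
  have hhalf := integral_Ioi_rpow_div_sq_add_rpow (a := 1 / 2) (by norm_num) (sub_pos.2 hq) hs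
  have heven := integral_comp_abs (f := fun u : ℝ ↦ 1 / (u ^ 2 + s) ^ q)
  simp only [sq_abs] at heven
  norm_num only [add_sub_cancel, rpow_zero] at hhalf
  rw [integral_sub_right_eq_self (fun u : ℝ ↦ 1 / (u ^ 2 + s) ^ q) x, heven, hhalf]
  field_simp

lemma beta_one_half_mul_beta_one_half {lam : ℝ} (hlam : 0 < lam) :
    beta (1 / 2) (lam + 1 / 2) * beta lam (1 / 2) = π / lam := by
  have hΓ : Gamma (lam + 1 / 2) ≠ 0 := (Gamma_pos_of_pos (by linarith)).ne'
  have hΓ' : Gamma lam ≠ 0 := (Gamma_pos_of_pos hlam).ne'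
  rw [beta, beta, show 1 / 2 + (lam + 1 / 2) = lam + 1 by ring, Gamma_add_one hlam.ne',
    Gamma_one_half_eq]
  field_simp
  rw [sq_sqrt pi_pos.le]

def besselPlaneKernel (lam t x : ℝ) (p : ℝ × ℝ) : ℝ :=
  if 0 < p.2 then p.2 ^ (2 * lam - 1) / ((p.1 - x) ^ 2 + (p.2 ^ 2 + t ^ 2)) ^ (lam + 1) else 0

lemma integral_besselPlaneKernel_slice {lam : ℝ} (t x v : ℝ) (hlam : -1 / 2 < lam) :
    ∫ u, besselPlaneKernel lam t x (u, v) = (Ioi 0).indicator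
      (fun v ↦ beta (1 / 2) (lam + 1 / 2) *
        (v ^ (2 * lam - 1) / (v ^ 2 + t ^ 2) ^ (lam + 1 / 2))) v := by
  by_cases hv : 0 < v
  · simp only [besselPlaneKernel, hv, if_true, indicator_of_mem (mem_Ioi.2 hv),
      div_eq_mul_one_div (v ^ (2 * lam - 1)), integral_const_mul]
    rw [integral_one_div_sq_sub_add_rpow x (by linarith) (by positivity)]
    ring_nf
  · simp [besselPlaneKernel, hv]

lemma besselPlaneKernel_nonneg (lam t x : ℝ) (p : ℝ × ℝ) : 0 ≤ besselPlaneKernel lam t x p := by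
  unfold besselPlaneKernel
  split_ifs with h
  · exact div_nonneg (rpow_nonneg h.le _) (rpow_nonneg (by positivity) _)
  · exact le_rfl

lemma measurable_besselPlaneKernel (lam t x : ℝ) : Measurable (besselPlaneKernel lam t x) :=
  Measurable.ite (measurableSet_lt measurable_const measurable_snd) (by fun_prop) measurable_const

theorem integral_besselPlaneKernel {lam t : ℝ} (x : ℝ) (hlam : 0 < lam) (ht : 0 < t) :
    ∫ p, besselPlaneKernel lam t x p = π / (2 * lam * t) := by
  have hslice v := integral_besselPlaneKernel_slice t x v (by linarith : -1 / 2 < lam)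
  have hprofile : ∫ v, (Ioi 0).indicator (fun v ↦ beta (1 / 2) (lam + 1 / 2) *
      (v ^ (2 * lam - 1) / (v ^ 2 + t ^ 2) ^ (lam + 1 / 2))) v = π / (2 * lam * t) := by
    rw [integral_indicator measurableSet_Ioi, integral_const_mul,
      integral_Ioi_rpow_div_sq_add_rpow hlam one_half_pos (by positivity), ← sqrt_eq_rpow,
      sqrt_sq ht.le, mul_div_assoc', beta_one_half_mul_beta_one_half hlam]
    field_simp
  have hint : Integrable (besselPlaneKernel lam t x) (volume.prod volume) := by
    refine (integrable_prod_iff' (measurable_besselPlaneKernel lam t x).aestronglyMeasurable).2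
      ⟨Filter.Eventually.of_forall fun v ↦ ?_, ?_⟩
    · by_cases hv : 0 < v
      · refine Integrable.of_integral_ne_zero ?_
        rw [hslice, indicator_of_mem (mem_Ioi.2 hv)]
        exact (mul_pos (beta_pos one_half_pos (by linarith)) (by positivity)).ne'
      · simp [besselPlaneKernel, hv]
    · simp_rw [norm_of_nonneg (besselPlaneKernel_nonneg lam t x _), hslice]
      exact Integrable.of_integral_ne_zero (by rw [hprofile]; positivity)
  rw [Measure.volume_eq_prod, integral_prod_symm _ hint]
  simp_rw [hslice]
  exact hprofile

def besselPolarDensity (lam t x y θ : ℝ) : ℝ :=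
  y ^ (2 * lam) * (sin θ ^ (2 * lam - 1) / (x ^ 2 + y ^ 2 + t ^ 2 - 2 * x * y * cos θ) ^ (lam + 1))

lemma polarCoord_smul_besselPlaneKernel {lam t x r θ : ℝ} (hr : 0 < r) (hθ : θ ∈ Ioo (-π) π) :
    r • besselPlaneKernel lam t x (polarCoord.symm (r, θ)) = (Ioi 0 ×ˢ Ioo 0 π).indicator
      (fun p : ℝ × ℝ ↦ besselPolarDensity lam t x p.1 p.2) (r, θ) := by
  by_cases hθ0 : 0 < θ
  · have hsin : 0 < sin θ := sin_pos_of_pos_of_lt_pi hθ0 hθ.2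
    have hmem : (r, θ) ∈ Ioi 0 ×ˢ Ioo 0 π := ⟨hr, hθ0, hθ.2⟩
    have hD : (r * cos θ - x) ^ 2 + ((r * sin θ) ^ 2 + t ^ 2) =
        x ^ 2 + r ^ 2 + t ^ 2 - 2 * x * r * cos θ := by
      linear_combination r ^ 2 * sin_sq_add_cos_sq θ
    have hr2 : r * r ^ (2 * lam - 1) = r ^ (2 * lam) := by
      rw [mul_comm, ← rpow_add_one hr.ne', sub_add_cancel]
    rw [indicator_of_mem hmem, besselPolarDensity, polarCoord_symm_apply, besselPlaneKernel,
      if_pos (by positivity), hD, mul_rpow hr.le hsin.le, smul_eq_mul, ← hr2]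
    ring
  · have hsin : sin θ ≤ 0 := sin_nonpos_of_nonpos_of_neg_pi_le (not_lt.1 hθ0) hθ.1.le
    have hmem : (r, θ) ∉ Ioi 0 ×ˢ Ioo 0 π := fun h ↦ hθ0 h.2.1
    rw [indicator_of_notMem hmem, polarCoord_symm_apply, besselPlaneKernel,
      if_neg (not_lt.2 (mul_nonpos_of_nonneg_of_nonpos hr.le hsin)), smul_zero]

theorem setIntegral_besselPolarDensity_eq_integral_besselPlaneKernel (lam t x : ℝ) :
    ∫ p in Ioi 0 ×ˢ Ioo 0 π, besselPolarDensity lam t x p.1 p.2 =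
      ∫ p, besselPlaneKernel lam t x p := by
  have hsub : Ioi 0 ×ˢ Ioo 0 π ⊆ polarCoord.target := by
    rw [polarCoord_target]
    exact prod_mono_right (Ioo_subset_Ioo_left (by linarith [pi_pos]))
  rw [← integral_comp_polarCoord_symm, ← inter_eq_self_of_subset_right hsub,
    ← setIntegral_indicator (measurableSet_Ioi.prod measurableSet_Ioo)]
  refine setIntegral_congr_fun polarCoord.open_target.measurableSet fun p hp ↦ ?_
  rw [polarCoord_target] at hp
  exact (polarCoord_smul_besselPlaneKernel hp.1 hp.2).symm

theorem integral_Ioi_integral_Ioo_besselPolarDensity {lam t : ℝ} (x : ℝ) (hlam : 0 < lam)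
    (ht : 0 < t) :
    ∫ y in Ioi 0, ∫ θ in Ioo 0 π, besselPolarDensity lam t x y θ = π / (2 * lam * t) := by
  have h := setIntegral_besselPolarDensity_eq_integral_besselPlaneKernel lam t x
  rw [integral_besselPlaneKernel x hlam ht] at h
  rw [← h, Measure.volume_eq_prod, setIntegral_prod]
  exact Integrable.of_integral_ne_zero (by rw [← Measure.volume_eq_prod, h]; positivity)

/-- Conservation property of the Bessel Poisson semigroup:
`∫₀^∞ P_t^{[λ]}(x,y) y^{2λ} dy = 1` for all `t, x > 0`. -/
theorem stmt10 (lam : ℝ) (hlam : 0 < lam) :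
    ∀ t x : ℝ, 0 < t → 0 < x →
      ∫ y in Ioi (0 : ℝ), besselP lam t x y * y ^ (2 * lam) = 1 := by
  intro t x ht _
  have hpull y : besselP lam t x y * y ^ (2 * lam) = 2 * lam * t / π *
      ∫ θ in Ioo 0 π, besselPolarDensity lam t x y θ := by
    simp only [besselP, besselPolarDensity, integral_const_mul]
    ring
  simp_rw [hpull]
  rw [integral_const_mul, integral_Ioi_integral_Ioo_besselPolarDensity x hlam ht]
  field_simp
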